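/- arXiv:math/0610809 — 2 statements merged into one kernel-verified Lean document; each statement's English description precedes it below -/
import Mathlib

section
/- For all real numbers y1, y2, y ≥ 0, one has (y1 + y2 − y)⁺ = ∫₀^y 1{y1 ≥ z, y2 ≥ y − z} dz + ∫_y^∞ (1{y1 ≥ z} + 1{y2 ≥ z}) dz. -/
/-! The first integrand is the indicator of `[y - y2, y1]`, so the first integral is the length
`(min y1 y - (y - y2)⁺)⁺` of its overlap with `(0, y]`; the tail integrals are `(y1 - y)⁺` and
`(y2 - y)⁺`. A case analysis on the order of `y`, `y1`, `y2`, `y1 + y2` sums these to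
`(y1 + y2 - y)⁺`. -/

open MeasureTheory Set

lemma setIntegral_Ioc_indicator_Icc_one (a b c d : ℝ) :
    ∫ z in Ioc a b, (Icc c d).indicator 1 z = max (min d b - max c a) 0 := by
  have hae : (Icc c d ∩ Ioc a b : Set ℝ) =ᵐ[volume] Ioc (max c a) (min d b) := by
    rw [← Ioc_inter_Ioc]
    exact Ioc_ae_eq_Icc.symm.inter (ae_eq_refl _)
  rw [integral_indicator_one measurableSet_Icc, measureReal_restrict_apply measurableSet_Icc,
    measureReal_congr hae, Real.volume_real_Ioc]

lemma setIntegral_Ioi_indicator_Iic_one (a b : ℝ) :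
    ∫ z in Ioi a, (Iic b).indicator 1 z = max (b - a) 0 := by
  rw [integral_indicator_one measurableSet_Iic, measureReal_restrict_apply measurableSet_Iic,
    Iic_inter_Ioi, Real.volume_real_Ioc]

lemma integrableOn_Ioi_indicator_Iic_one (a b : ℝ) :
    IntegrableOn ((Iic b).indicator (1 : ℝ → ℝ)) (Ioi a) := by
  refine (integrable_indicator_iff measurableSet_Iic).2 (integrableOn_const ?_)
  rw [Measure.restrict_apply measurableSet_Iic, Iic_inter_Ioi]
  exact measure_Ioc_lt_top.ne

lemma max_add_sub_zero_eq_of_nonneg (y1 y2 y : ℝ) (h1 : 0 ≤ y1) (h2 : 0 ≤ y2) (hy : 0 ≤ y) :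
    max (y1 + y2 - y) 0 =
      max (min y1 y - max (y - y2) 0) 0 + (max (y1 - y) 0 + max (y2 - y) 0) := by
  rcases le_total y y1 with ha | ha <;> rcases le_total y y2 with hb | hb <;>
    rcases le_total y (y1 + y2) with hc | hc <;>
    simp only [min_def, max_def] <;> split_ifs <;> linarith

theorem call_payoff_sum_decomposition (y1 y2 y : ℝ) (h1 : 0 ≤ y1) (h2 : 0 ≤ y2) (hy : 0 ≤ y) :
    max (y1 + y2 - y) 0 =
      (∫ z in Set.Ioc (0 : ℝ) y, (if z ≤ y1 ∧ y - z ≤ y2 then (1 : ℝ) else 0)) +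
      ∫ z in Set.Ioi y, ((if z ≤ y1 then (1 : ℝ) else 0) + (if z ≤ y2 then (1 : ℝ) else 0)) := by
  have hboth (z : ℝ) :
      (if z ≤ y1 ∧ y - z ≤ y2 then (1 : ℝ) else 0) = (Icc (y - y2) y1).indicator 1 z := by
    simp only [indicator_apply, mem_Icc, Pi.one_apply, sub_le_comm (a := y), and_comm]
  have hle (b z : ℝ) : (if z ≤ b then (1 : ℝ) else 0) = (Iic b).indicator 1 z := rfl
  simp_rw [hboth, hle]
  rw [integral_add (integrableOn_Ioi_indicator_Iic_one y y1)
      (integrableOn_Ioi_indicator_Iic_one y y2),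
    setIntegral_Ioc_indicator_Icc_one, setIntegral_Ioi_indicator_Iic_one,
    setIntegral_Ioi_indicator_Iic_one]
  exact max_add_sub_zero_eq_of_nonneg y1 y2 y h1 h2 hy
end

section
/- Let (Y_t)_{t∈[0,T]} be a continuous martingale, x ∈ ℝ, z ∈ ℝ, and t_z = inf{t ≥ 0 : Y_t ≤ z} with Y_{t_z} = z on {t_z ≤ T}. If E[(X_T − y)⁺ 1{τ > T}] = E[(x − Y_{T ∧ t_z})⁺] and E[(X_T − y)⁺] = E[(x − Y_T)⁺] (Put–Call duality), then E[(X_T − y)⁺ 1{τ ≤ T}] = E[(Y_T − x)⁺ 1{t_z ≤ T}]. -/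
open MeasureTheory Set Filter Topology

/-!
Splitting `E[(X_T - y)⁺]` along `{τ ≤ T}`, the two duality relations reduce the claim to
`E[(x - Y_T)⁺] - E[(x - Y_{T ∧ t_z})⁺] = E[(Y_T - x)⁺; t_z ≤ T]`. Off `{t_z ≤ T}` the two puts
coincide; on it `Y_{T ∧ t_z} = z ≤ x`, so the stopped put is `x - Y_{T ∧ t_z}`, and
`(x - Y_T)⁺ - (x - Y_T) = (Y_T - x)⁺`. What is left over is `E[Y_T - Y_{T ∧ t_z}]`, which vanishes
by optional stopping. In continuous time this comes from the discrete theorem: `t_z` is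
approximated from above by the dyadic stopping times `T ∧ ⌈2ⁿ t_z⌉ / 2ⁿ`, the stopped values
`E[Y_T | ℱ_σ]` are uniformly integrable, and right-continuity of the paths gives a.e.
convergence, so Vitali's theorem passes to the limit.
-/

noncomputable def dyadicCeil (n : ℕ) (t : ℝ) : ℝ := ⌈t * 2 ^ n⌉ / 2 ^ n

section DyadicCeil

variable (n : ℕ) (t : ℝ)

lemma le_dyadicCeil : t ≤ dyadicCeil n t := by
  rw [dyadicCeil, le_div_iff₀ (by positivity)]
  exact Int.le_ceil _

lemma dyadicCeil_le_add_inv_two_pow : dyadicCeil n t ≤ t + (2 ^ n)⁻¹ := by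
  rw [dyadicCeil, div_le_iff₀ (by positivity), add_mul, inv_mul_cancel₀ (by positivity)]
  exact (Int.ceil_lt_add_one _).le

lemma dyadicCeil_le_iff {s : ℝ} : dyadicCeil n t ≤ s ↔ t ≤ ⌊s * 2 ^ n⌋ / 2 ^ n := by
  rw [dyadicCeil, div_le_iff₀ (by positivity), le_div_iff₀ (by positivity), ← Int.le_floor,
    Int.ceil_le]

lemma floor_mul_two_pow_div_le (s : ℝ) : (⌊s * 2 ^ n⌋ : ℝ) / 2 ^ n ≤ s := by
  rw [div_le_iff₀ (by positivity)]
  exact Int.floor_le _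

lemma tendsto_dyadicCeil : Tendsto (fun n => dyadicCeil n t) atTop (𝓝[≥] t) := by
  have hlim : Tendsto (fun n : ℕ => t + ((2 : ℝ) ^ n)⁻¹) atTop (𝓝 t) := by
    simpa using tendsto_const_nhds.add
      (tendsto_inv_atTop_zero.comp (tendsto_pow_atTop_atTop_of_one_lt (one_lt_two (α := ℝ))))
  refine tendsto_nhdsWithin_iff.2 ⟨?_, Eventually.of_forall fun n => le_dyadicCeil n t⟩
  exact tendsto_of_tendsto_of_tendsto_of_le_of_le tendsto_const_nhds hlim
    (le_dyadicCeil · t) (dyadicCeil_le_add_inv_two_pow · t)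

lemma countable_range_dyadicCeil : (range (dyadicCeil n)).Countable :=
  (countable_range fun k : ℤ => (k : ℝ) / 2 ^ n).mono <|
    range_subset_iff.2 fun t => mem_range_self ⌈t * 2 ^ n⌉

end DyadicCeil

namespace MeasureTheory.IsStoppingTime

variable {Ω : Type*} {mΩ : MeasurableSpace Ω} {ℱ : Filtration ℝ mΩ} {τ : Ω → ℝ}

lemma dyadicCeil (hτ : IsStoppingTime ℱ fun ω => (τ ω : WithTop ℝ)) (n : ℕ) :
    IsStoppingTime ℱ fun ω => (_root_.dyadicCeil n (τ ω) : WithTop ℝ) := by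
  intro t
  simp only [WithTop.coe_le_coe, dyadicCeil_le_iff]
  exact ℱ.mono (floor_mul_two_pow_div_le n t) _ (by simpa only [WithTop.coe_le_coe] using hτ _)

lemma const_min_dyadicCeil (hτ : IsStoppingTime ℱ fun ω => (τ ω : WithTop ℝ)) (T : ℝ) (n : ℕ) :
    IsStoppingTime ℱ fun ω => (min T (_root_.dyadicCeil n (τ ω)) : WithTop ℝ) := by
  simpa only [WithTop.coe_min] using (isStoppingTime_const ℱ T).min (hτ.dyadicCeil n)

end MeasureTheory.IsStoppingTime

lemma tendsto_const_min_dyadicCeil_of_continuousWithinAt {f : ℝ → ℝ} {T t : ℝ}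
    (hf : ContinuousWithinAt f (Ici (min T t)) (min T t)) :
    Tendsto (fun n => f (min T (dyadicCeil n t))) atTop (𝓝 (f (min T t))) := by
  refine hf.tendsto.comp (tendsto_nhdsWithin_iff.2 ⟨?_, Eventually.of_forall fun n => ?_⟩)
  · exact tendsto_const_nhds.min ((tendsto_dyadicCeil t).mono_right nhdsWithin_le_nhds)
  · exact min_le_min_left T (le_dyadicCeil n t)

namespace MeasureTheory.Martingale

variable {Ω : Type*} {mΩ : MeasurableSpace Ω} {μ : Measure Ω} [IsFiniteMeasure μ]
  {ℱ : Filtration ℝ mΩ} {Y : ℝ → Ω → ℝ} {τ : Ω → ℝ}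

lemma const_min_dyadicCeil_ae_eq_condExp (hY : Martingale Y ℱ μ)
    (hτ : IsStoppingTime ℱ fun ω => (τ ω : WithTop ℝ)) (T : ℝ) (n : ℕ) :
    (fun ω => Y (min T (dyadicCeil n (τ ω))) ω) =ᵐ[μ]
      μ[Y T | (hτ.const_min_dyadicCeil T n).measurableSpace] := by
  refine hY.stoppedValue_ae_eq_condExp_of_le_const_of_countable_range _
    (fun _ => WithTop.coe_le_coe.2 (min_le_left _ _)) ?_
  refine ((countable_range_dyadicCeil n).image fun r => ((min T r : ℝ) : WithTop ℝ)).mono ?_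
  rintro _ ⟨ω, rfl⟩
  exact mem_image_of_mem _ (mem_range_self _)

lemma uniformIntegrable_const_min_dyadicCeil (hY : Martingale Y ℱ μ)
    (hτ : IsStoppingTime ℱ fun ω => (τ ω : WithTop ℝ)) (T : ℝ) :
    UniformIntegrable (fun n ω => Y (min T (dyadicCeil n (τ ω))) ω) 1 μ :=
  ((hY.integrable T).uniformIntegrable_condExp fun n =>
    (hτ.const_min_dyadicCeil T n).measurableSpace_le_of_le fun _ =>
      WithTop.coe_le_coe.2 (min_le_left _ _)).ae_eq
    fun n => (hY.const_min_dyadicCeil_ae_eq_condExp hτ T n).symm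

lemma integral_const_min_dyadicCeil (hY : Martingale Y ℱ μ)
    (hτ : IsStoppingTime ℱ fun ω => (τ ω : WithTop ℝ)) (T : ℝ) (n : ℕ) :
    ∫ ω, Y (min T (dyadicCeil n (τ ω))) ω ∂μ = ∫ ω, Y T ω ∂μ := by
  rw [integral_congr_ae (hY.const_min_dyadicCeil_ae_eq_condExp hτ T n),
    integral_condExp ((hτ.const_min_dyadicCeil T n).measurableSpace_le_of_le fun _ =>
      WithTop.coe_le_coe.2 (min_le_left _ _))]

theorem integrable_const_min_stoppingTime (hY : Martingale Y ℱ μ)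
    (hcont : ∀ ω t, ContinuousWithinAt (fun s => Y s ω) (Ici t) t)
    (hτ : IsStoppingTime ℱ fun ω => (τ ω : WithTop ℝ)) (T : ℝ) :
    Integrable (fun ω => Y (min T (τ ω)) ω) μ :=
  (hY.uniformIntegrable_const_min_dyadicCeil hτ T).integrable_of_ae_tendsto
    (ae_of_all _ fun ω => tendsto_const_min_dyadicCeil_of_continuousWithinAt (hcont ω _))

theorem integral_const_min_stoppingTime (hY : Martingale Y ℱ μ)
    (hcont : ∀ ω t, ContinuousWithinAt (fun s => Y s ω) (Ici t) t)
    (hτ : IsStoppingTime ℱ fun ω => (τ ω : WithTop ℝ)) (T : ℝ) :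
    ∫ ω, Y (min T (τ ω)) ω ∂μ = ∫ ω, Y T ω ∂μ := by
  have hUI := hY.uniformIntegrable_const_min_dyadicCeil hτ T
  have hint := hY.integrable_const_min_stoppingTime hcont hτ T
  have hL1 := tendsto_Lp_finite_of_tendsto_ae le_rfl ENNReal.one_ne_top hUI.1
    (memLp_one_iff_integrable.2 hint) hUI.2.1
    (ae_of_all _ fun ω => tendsto_const_min_dyadicCeil_of_continuousWithinAt (hcont ω _))
  refine tendsto_nhds_unique
    (tendsto_integral_of_L1' _ hint.1 (Eventually.of_forall fun n => ?_) hL1) ?_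
  · exact integrable_condExp.congr (hY.const_min_dyadicCeil_ae_eq_condExp hτ T n).symm
  · simp only [hY.integral_const_min_dyadicCeil hτ T, tendsto_const_nhds]

end MeasureTheory.Martingale

lemma integral_put_sub_integral_put_eq_setIntegral_call {Ω : Type*} {mΩ : MeasurableSpace Ω}
    {μ : Measure Ω} [IsFiniteMeasure μ] {B S : Ω → ℝ} {P : Set Ω} {x : ℝ}
    (hBS : ∫ ω, S ω ∂μ = ∫ ω, B ω ∂μ)
    (hP : MeasurableSet P) (hB : Integrable B μ) (hS : Integrable S μ)
    (hS_le : ∀ ω ∈ P, S ω ≤ x) (hS_eq : ∀ ω ∉ P, S ω = B ω) :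
    ∫ ω, max (x - B ω) 0 ∂μ - ∫ ω, max (x - S ω) 0 ∂μ = ∫ ω in P, max (B ω - x) 0 ∂μ := by
  have hput (f : Ω → ℝ) (hf : Integrable f μ) : Integrable (fun ω => max (x - f ω) 0) μ :=
    ((integrable_const x).sub hf).pos_part
  have hpt (ω : Ω) : max (x - B ω) 0 - max (x - S ω) 0 =
      P.indicator (fun ω => max (B ω - x) 0) ω - (B ω - S ω) := by
    by_cases hω : ω ∈ P
    · -- `(x - b)⁺ - (b - x)⁺ = x - b`
      rw [indicator_of_mem hω, max_eq_left (sub_nonneg.2 (hS_le ω hω))]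
      rcases le_total x (B ω) with h | h <;> simp [h]
    · simp [indicator_of_notMem hω, hS_eq ω hω]
  calc ∫ ω, max (x - B ω) 0 ∂μ - ∫ ω, max (x - S ω) 0 ∂μ
      = ∫ ω, (P.indicator (fun ω => max (B ω - x) 0) ω - (B ω - S ω)) ∂μ := by
        rw [← integral_sub (hput B hB) (hput S hS)]
        exact integral_congr_ae (ae_of_all _ hpt)
    _ = ∫ ω in P, max (B ω - x) 0 ∂μ := by
        have hcall : Integrable (fun ω => max (B ω - x) 0) μ :=
          (hB.sub (integrable_const x)).pos_part
        have hdiff : Integrable (fun ω => B ω - S ω) μ := hB.sub hS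
        rw [integral_sub (hcall.indicator hP) hdiff, integral_indicator hP,
          integral_sub hB hS, hBS, sub_self, sub_zero]

theorem barrier_duality_on_hit_event_general
    {Ω : Type*} {mΩ : MeasurableSpace Ω} {μ : Measure Ω} [IsProbabilityMeasure μ]
    (ℱ : Filtration ℝ mΩ) (Y : ℝ → Ω → ℝ)
    (hmart : Martingale Y ℱ μ)
    (hcont : ∀ ω, Continuous fun t => Y t ω)
    (XT : Ω → ℝ) (τ tz : Ω → ℝ) (hτ : Measurable τ) (htz : IsStoppingTime ℱ (fun ω => (tz ω : WithTop ℝ)))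
    (x y z T : ℝ) (hxz : z ≤ x)
    (hXTint : Integrable XT μ)
    (hstop : ∀ ω, tz ω ≤ T → Y (min T (tz ω)) ω = z)
    (hdual_barrier : ∫ ω in {ω | T < τ ω}, max (XT ω - y) 0 ∂μ =
      ∫ ω, max (x - Y (min T (tz ω)) ω) 0 ∂μ)
    (hdual : ∫ ω, max (XT ω - y) 0 ∂μ = ∫ ω, max (x - Y T ω) 0 ∂μ) :
    ∫ ω in {ω | τ ω ≤ T}, max (XT ω - y) 0 ∂μ =
      ∫ ω in {ω | tz ω ≤ T}, max (Y T ω - x) 0 ∂μ := by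
  have hrcont (ω : Ω) (t : ℝ) : ContinuousWithinAt (fun s => Y s ω) (Ici t) t :=
    (hcont ω).continuousWithinAt
  have hhit : MeasurableSet {ω | tz ω ≤ T} := by
    simpa only [WithTop.coe_le_coe] using ℱ.le T _ (htz T)
  have hput := integral_put_sub_integral_put_eq_setIntegral_call
    (hmart.integral_const_min_stoppingTime hrcont htz T) hhit (hmart.integrable T)
    (hmart.integrable_const_min_stoppingTime hrcont htz T)
    (fun ω hω => (hstop ω hω).trans_le hxz)
    (fun ω hω => by rw [min_eq_left (not_le.1 hω).le])
  have hpayoff : Integrable (fun ω => max (XT ω - y) 0) μ :=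
    (hXTint.sub (integrable_const y)).pos_part
  have hsplit := integral_add_compl (measurableSet_le hτ (measurable_const (a := T))) hpayoff
  simp only [compl_ofPred, not_le] at hsplit
  linarith

theorem barrier_duality_on_hit_event
    {Ω : Type*} {mΩ : MeasurableSpace Ω} {μ : Measure Ω} [IsProbabilityMeasure μ]
    (ℱ : Filtration ℝ mΩ) (Y : ℝ → Ω → ℝ)
    (hmart : Martingale Y ℱ μ)
    (hcont : ∀ ω, Continuous fun t => Y t ω)
    (XT : Ω → ℝ) (τ tz : Ω → ℝ) (hτ : Measurable τ) (htz : IsStoppingTime ℱ (fun ω => (tz ω : WithTop ℝ)))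
    (x y z T : ℝ) (hT : 0 < T) (hxz : z ≤ x)
    (hXTint : Integrable XT μ)
    (hYTint : Integrable (Y T) μ)
    (hYstopint : Integrable (fun ω => Y (min T (tz ω)) ω) μ)
    (hstop : ∀ ω, tz ω ≤ T → Y (min T (tz ω)) ω = z)
    (hdual_barrier : ∫ ω in {ω | T < τ ω}, max (XT ω - y) 0 ∂μ =
      ∫ ω, max (x - Y (min T (tz ω)) ω) 0 ∂μ)
    (hdual : ∫ ω, max (XT ω - y) 0 ∂μ = ∫ ω, max (x - Y T ω) 0 ∂μ) :
    ∫ ω in {ω | τ ω ≤ T}, max (XT ω - y) 0 ∂μ =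
      ∫ ω in {ω | tz ω ≤ T}, max (Y T ω - x) 0 ∂μ :=
  barrier_duality_on_hit_event_general ℱ Y hmart hcont XT τ tz hτ htz x y z T hxz hXTint hstop
    hdual_barrier hdual
end
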